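/- Let (V, Φ) be a reduced irreducible root system with base Δ. If α ∈ Δ is co-special, then there exists w ∈ W_α with w·α = α^{h₂}, the Δ-dominant root whose coroot is the highest coroot; in particular α is W_α-conjugate to the Δ-dominant short root (which equals the highest root in a simply-laced system and the highest short root otherwise). -/
import Mathlib


open scoped BigOperators

/-- A reduced irreducible root system, with a choice of base of simple roots,
in a finite-dimensional `ℚ`-vector space `V` equipped with a positive definite
symmetric bilinear form. -/
structure RootSystemBase (V : Type*) [AddCommGroup V] [Module ℚ V] : Type _ where
  /-- the symmetric bilinear form `( , )` -/
  B : V →ₗ[ℚ] V →ₗ[ℚ] ℚ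
  B_symm : ∀ u v : V, B u v = B v u
  B_posdef : ∀ v : V, v ≠ 0 → 0 < B v v
  /-- the (finite) set of roots -/
  Φ : Finset V
  zero_notMem : (0 : V) ∉ Φ
  span_top : Submodule.span ℚ (Φ : Set V) = ⊤
  reflect_mem : ∀ β ∈ Φ, ∀ γ ∈ Φ, γ - (2 * B β γ / B β β) • β ∈ Φ
  integral : ∀ β ∈ Φ, ∀ γ ∈ Φ, ∃ n : ℤ, 2 * B β γ / B β β = (n : ℚ)
  reduced : ∀ β ∈ Φ, ∀ c : ℚ, c • β ∈ Φ → c = 1 ∨ c = -1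
  irreducible : ∀ s ⊆ Φ, s.Nonempty →
    (∀ β ∈ s, ∀ γ ∈ Φ, γ ∉ s → B β γ = 0) → s = Φ
  /-- the base of simple roots -/
  Δ : Finset V
  Δ_sub : Δ ⊆ Φ
  Δ_indep : LinearIndependent ℚ (Subtype.val : {x : V // x ∈ Δ} → V)
  /-- `coord v α` is the coefficient of the simple root `α` when `v` is written in the basis `Δ` -/
  coord : V → V → ℚ
  coord_spec : ∀ v : V, v = ∑ α ∈ Δ, coord v α • α
  coord_int : ∀ β ∈ Φ, ∀ α ∈ Δ, ∃ n : ℤ, coord β α = (n : ℚ)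
  pos_or_neg : ∀ β ∈ Φ, (∀ α ∈ Δ, 0 ≤ coord β α) ∨ (∀ α ∈ Δ, coord β α ≤ 0)

namespace RootSystemBase

variable {V : Type*} [AddCommGroup V] [Module ℚ V] (P : RootSystemBase V)

/-- the coroot `β^∨ = 2β/(β,β)` -/
noncomputable def coroot (β : V) : V := (2 / P.B β β) • β

/-- `m^∨_β(α)`: the coefficient of `α^∨` when `β^∨` is written in the basis `Δ^∨` -/
noncomputable def corootMult (β α : V) : ℚ := P.coord (P.coroot β) α * (P.B α α / 2)

/-- the positive roots `Φ⁺` determined by the base `Δ` -/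
noncomputable def posRoots : Finset V := P.Φ.filter (fun β => ∀ α ∈ P.Δ, 0 ≤ P.coord β α)

/-- a root is long if its length is maximal -/
def IsLong (β : V) : Prop := ∀ γ ∈ P.Φ, P.B γ γ ≤ P.B β β

/-- a root is short if its length is minimal -/
def IsShort (β : V) : Prop := ∀ γ ∈ P.Φ, P.B β β ≤ P.B γ γ

/-- `h` is the highest root: every (positive) root has smaller multiplicities -/
def IsHighestRoot (h : V) : Prop :=
  h ∈ P.Φ ∧ ∀ β ∈ P.posRoots, ∀ α ∈ P.Δ, P.coord β α ≤ P.coord h α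

/-- `h₂` is the root whose coroot is the highest root of the dual system `Φ^∨` -/
def IsDualHighest (h₂ : V) : Prop :=
  h₂ ∈ P.Φ ∧ ∀ β ∈ P.posRoots, ∀ α ∈ P.Δ, P.corootMult β α ≤ P.corootMult h₂ α

/-- a simple root `α` is special if `m_{α^h}(α) = 1` -/
def IsSpecial (α : V) : Prop :=
  α ∈ P.Δ ∧ ∀ h : V, P.IsHighestRoot h → P.coord h α = 1

/-- a simple root `α` is co-special if `m^∨_{α^{h₂}}(α) = 1` -/
def IsCospecial (α : V) : Prop :=
  α ∈ P.Δ ∧ ∀ h₂ : V, P.IsDualHighest h₂ → P.corootMult h₂ α = 1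

/-- the reflection `s_β` in a root `β` (junk value `id` if `(β,β) = 0`) -/
noncomputable def refl (β : V) : V ≃ₗ[ℚ] V :=
  if h : P.B β β ≠ 0 then
    Module.reflection (x := β) (f := (2 / P.B β β) • P.B β)
      (by simp only [LinearMap.smul_apply, smul_eq_mul]; field_simp)
  else LinearEquiv.refl ℚ V

/-- the Weyl group `W`, as a group of linear automorphisms of `V` -/
noncomputable def weylGroup : Subgroup (V ≃ₗ[ℚ] V) :=
  Subgroup.closure { g | ∃ β ∈ P.Φ, g = P.refl β }

/-- the Weyl group `W_α` of the maximal Levi determined by `α ∈ Δ`, generated by the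
simple reflections `s_{α'}`, `α' ∈ Δ \ {α}` -/
noncomputable def leviWeyl (α : V) : Subgroup (V ≃ₗ[ℚ] V) :=
  Subgroup.closure { g | ∃ α' ∈ P.Δ, α' ≠ α ∧ g = P.refl α' }

/-- `v` is `Δ`-dominant -/
def IsDominant (v : V) : Prop := ∀ α ∈ P.Δ, 0 ≤ P.B v α

/-- `v` is `(Δ \ {α})`-dominant -/
def IsDominantAway (α v : V) : Prop := ∀ α' ∈ P.Δ, α' ≠ α → 0 ≤ P.B v α'

/-- `χ` is quasi-constant -/
def IsQuasiConstant (χ : V) : Prop :=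
  ∀ β ∈ P.Φ, P.B χ (P.coroot β) ≠ 0 → ∀ w ∈ P.weylGroup,
    P.B χ (w (P.coroot β)) / P.B χ (P.coroot β) ∈ ({-1, 0, 1} : Set ℚ)


section Lemmas

lemma root_ne_zero {β : V} (hβ : β ∈ P.Φ) : β ≠ 0 :=
  fun h => P.zero_notMem (h ▸ hβ)

lemma B_root_pos {β : V} (hβ : β ∈ P.Φ) : 0 < P.B β β :=
  P.B_posdef β (P.root_ne_zero hβ)

lemma B_nonneg (v : V) : 0 ≤ P.B v v := by
  rcases eq_or_ne v 0 with rfl | h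
  · simp
  · exact le_of_lt (P.B_posdef v h)

lemma coord_unique {v : V} {c : V → ℚ} (h : v = ∑ α ∈ P.Δ, c α • α) :
    ∀ α ∈ P.Δ, P.coord v α = c α := by
  have hsum : ∑ a : {x : V // x ∈ P.Δ}, (P.coord v a.1 - c a.1) • (a.1 : V) = 0 := by
    rw [Finset.sum_coe_sort P.Δ (fun α => (P.coord v α - c α) • α)]
    simp only [sub_smul]
    rw [Finset.sum_sub_distrib, ← P.coord_spec v, ← h, sub_self]
  have hli := Fintype.linearIndependent_iff.mp P.Δ_indep
    (fun a => P.coord v a.1 - c a.1) hsum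
  intro α hα
  have := hli ⟨α, hα⟩
  simpa [sub_eq_zero] using this

lemma coord_add_smul (x : V) (t : ℚ) (y : V) :
    ∀ α ∈ P.Δ, P.coord (x + t • y) α = P.coord x α + t * P.coord y α := by
  apply P.coord_unique
  have hx := P.coord_spec x
  have hy := P.coord_spec y
  calc x + t • y = (∑ α ∈ P.Δ, P.coord x α • α) + t • (∑ α ∈ P.Δ, P.coord y α • α) := by
        rw [← hx, ← hy]
    _ = ∑ α ∈ P.Δ, (P.coord x α + t * P.coord y α) • α := by
        rw [Finset.smul_sum, ← Finset.sum_add_distrib]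
        refine Finset.sum_congr rfl fun α _ => ?_
        rw [add_smul, smul_smul]

lemma coord_smul (t : ℚ) (y : V) :
    ∀ α ∈ P.Δ, P.coord (t • y) α = t * P.coord y α := by
  intro α hα
  have := P.coord_add_smul 0 t y α hα
  have h0 : ∀ α ∈ P.Δ, P.coord (0 : V) α = 0 := by
    apply P.coord_unique; simp
  simpa [h0 α hα] using this

open Classical in
lemma coord_simple {α' : V} (hα' : α' ∈ P.Δ) :
    ∀ α ∈ P.Δ, P.coord α' α = if α = α' then 1 else 0 := by
  apply P.coord_unique
  classical
  rw [show (∑ α ∈ P.Δ, (if α = α' then (1:ℚ) else 0) • α)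
      = ∑ α ∈ P.Δ, (if α = α' then ((1:ℚ) • α) else 0) from
    Finset.sum_congr rfl fun α _ => by split <;> simp]
  rw [Finset.sum_ite_eq' P.Δ α' (fun α => (1:ℚ) • α)]
  simp [hα']

lemma B_expand (v y : V) : P.B v y = ∑ α ∈ P.Δ, P.coord v α * P.B α y := by
  conv_lhs => rw [P.coord_spec v]
  rw [map_sum]
  simp [LinearMap.sum_apply]

end Lemmas

section ReflLemmas

lemma refl_apply {β : V} (hβ : P.B β β ≠ 0) (x : V) :
    P.refl β x = x - (2 * P.B β x / P.B β β) • β := by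
  rw [RootSystemBase.refl, dif_pos hβ, Module.reflection_apply]
  congr 2
  simp only [LinearMap.smul_apply, smul_eq_mul]
  field_simp

lemma refl_mem {β : V} (hβ : β ∈ P.Φ) {γ : V} (hγ : γ ∈ P.Φ) : P.refl β γ ∈ P.Φ := by
  rw [P.refl_apply (ne_of_gt (P.B_root_pos hβ))]
  exact P.reflect_mem β hβ γ hγ

lemma refl_B {β : V} (hβ : P.B β β ≠ 0) (x y : V) :
    P.B (P.refl β x) (P.refl β y) = P.B x y := by
  rw [P.refl_apply hβ, P.refl_apply hβ]
  have h1 : P.B x β = P.B β x := P.B_symm x β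
  have h2 : P.B y β = P.B β y := P.B_symm y β
  have h3 : P.B β y = P.B y β := P.B_symm β y
  simp only [map_sub, map_smul, LinearMap.sub_apply, LinearMap.smul_apply, smul_eq_mul]
  field_simp
  linear_combination (-2 * P.B β y) * h1

lemma refl_inv (β : V) : (P.refl β)⁻¹ = P.refl β := by
  rw [RootSystemBase.refl]
  split
  · exact Module.reflection_symm _
  · rfl

lemma refl_mem_weylGroup {β : V} (hβ : β ∈ P.Φ) : P.refl β ∈ P.weylGroup :=
  Subgroup.subset_closure ⟨β, hβ, rfl⟩

lemma weylGroup_B {w : V ≃ₗ[ℚ] V} (hw : w ∈ P.weylGroup) (x y : V) :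
    P.B (w x) (w y) = P.B x y := by
  induction hw using Subgroup.closure_induction generalizing x y with
  | mem s hs =>
    obtain ⟨β, hβ, rfl⟩ := hs
    exact P.refl_B (ne_of_gt (P.B_root_pos hβ)) x y
  | one => rfl
  | mul a b ha hb pa pb =>
    have : (a * b) x = a (b x) := rfl
    rw [show (a * b) x = a (b x) from rfl, show (a * b) y = a (b y) from rfl, pa, pb]
  | inv a ha pa =>
    have := pa (x := a⁻¹ x) (y := a⁻¹ y)
    rw [show a (a⁻¹ x) = x from a.apply_symm_apply x,
      show a (a⁻¹ y) = y from a.apply_symm_apply y] at this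
    exact this.symm

lemma weylGroup_mem {w : V ≃ₗ[ℚ] V} (hw : w ∈ P.weylGroup) {γ : V} (hγ : γ ∈ P.Φ) :
    w γ ∈ P.Φ := by
  have key : ∀ γ ∈ P.Φ, w γ ∈ P.Φ ∧ w⁻¹ γ ∈ P.Φ := by
    clear hγ γ
    induction hw using Subgroup.closure_induction with
    | mem s hs =>
      obtain ⟨β, hβ, rfl⟩ := hs
      intro γ hγ
      refine ⟨P.refl_mem hβ hγ, ?_⟩
      rw [P.refl_inv β]
      exact P.refl_mem hβ hγ
    | one => intro γ hγ; exact ⟨hγ, hγ⟩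
    | mul a b ha hb pa pb =>
      intro γ hγ
      constructor
      · exact (pa _ ((pb γ hγ).1)).1
      · show (a*b)⁻¹ γ ∈ P.Φ
        rw [mul_inv_rev]
        exact (pb _ ((pa γ hγ).2)).2
    | inv a ha pa =>
      intro γ hγ
      exact ⟨(pa γ hγ).2, by simpa using (pa γ hγ).1⟩
  exact (key γ hγ).1

lemma leviWeyl_le (α : V) : P.leviWeyl α ≤ P.weylGroup := by
  apply (Subgroup.closure_le _).mpr
  rintro g ⟨α', hα', hne, rfl⟩
  exact Subgroup.subset_closure ⟨α', P.Δ_sub hα', rfl⟩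

lemma leviWeyl_coord {α : V} (hα : α ∈ P.Δ) {w : V ≃ₗ[ℚ] V} (hw : w ∈ P.leviWeyl α)
    (x : V) : P.coord (w x) α = P.coord x α := by
  induction hw using Subgroup.closure_induction generalizing x with
  | mem s hs =>
    obtain ⟨α', hα', hne, rfl⟩ := hs
    have hα'Φ : α' ∈ P.Φ := P.Δ_sub hα'
    rw [P.refl_apply (ne_of_gt (P.B_root_pos hα'Φ))]
    rw [sub_eq_add_neg, ← neg_smul]
    rw [P.coord_add_smul x _ α' α hα]
    rw [P.coord_simple hα' α hα]
    rw [if_neg (Ne.symm hne)]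
    ring
  | one => rfl
  | mul a b ha hb pa pb =>
    rw [show (a * b) x = a (b x) from rfl, pa, pb]
  | inv a ha pa =>
    have := pa (x := a⁻¹ x)
    rw [show a (a⁻¹ x) = x from a.apply_symm_apply x] at this
    exact this.symm

end ReflLemmas

section MoreLemmas

lemma cauchy_schwarz {u v : V} (hu : 0 < P.B u u) :
    (P.B u v) ^ 2 ≤ P.B u u * P.B v v := by
  set t : ℚ := P.B u v / P.B u u with htdef
  have hexp : P.B (v - t • u) (v - t • u)
      = P.B v v - 2 * t * P.B u v + t ^ 2 * P.B u u := by
    simp only [map_sub, map_smul, LinearMap.sub_apply, LinearMap.smul_apply, smul_eq_mul]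
    rw [P.B_symm v u]; ring
  have h := P.B_nonneg (v - t • u)
  rw [hexp] at h
  have hrw : P.B v v - 2 * t * P.B u v + t ^ 2 * P.B u u
      = (P.B u u * P.B v v - (P.B u v) ^ 2) / P.B u u := by
    rw [htdef]; field_simp; ring
  rw [hrw] at h
  have h2 : 0 ≤ P.B u u * P.B v v - (P.B u v) ^ 2 := by
    have := mul_nonneg h hu.le
    rwa [div_mul_cancel₀ _ (ne_of_gt hu)] at this
  linarith

lemma cauchy_schwarz_eq {u v : V} (hu : 0 < P.B u u)
    (h : (P.B u v) ^ 2 = P.B u u * P.B v v) : v = (P.B u v / P.B u u) • u := by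
  by_contra hne
  set t : ℚ := P.B u v / P.B u u with htdef
  have hw : v - t • u ≠ 0 := sub_ne_zero.mpr hne
  have hpos := P.B_posdef _ hw
  have hexp : P.B (v - t • u) (v - t • u)
      = P.B v v - 2 * t * P.B u v + t ^ 2 * P.B u u := by
    simp only [map_sub, map_smul, LinearMap.sub_apply, LinearMap.smul_apply, smul_eq_mul]
    rw [P.B_symm v u]; ring
  rw [hexp] at hpos
  have hrw : P.B v v - 2 * t * P.B u v + t ^ 2 * P.B u u
      = (P.B u u * P.B v v - (P.B u v) ^ 2) / P.B u u := by
    rw [htdef]; field_simp; ring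
  rw [hrw, ← h, sub_self, zero_div] at hpos
  exact lt_irrefl 0 hpos

lemma corootMult_eq {x : V} (hx : P.B x x ≠ 0) {α : V} (hα : α ∈ P.Δ) :
    P.corootMult x α = P.coord x α * P.B α α / P.B x x := by
  rw [RootSystemBase.corootMult, RootSystemBase.coroot, P.coord_smul _ _ α hα]
  field_simp

/-- height of a vector w.r.t. the base -/
noncomputable def ht (x : V) : ℚ := ∑ α ∈ P.Δ, P.coord x α

lemma ht_add_smul (x : V) (t : ℚ) {α' : V} (hα' : α' ∈ P.Δ) :
    P.ht (x + t • α') = P.ht x + t := by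
  classical
  unfold ht
  rw [Finset.sum_congr rfl (fun α hα => P.coord_add_smul x t α' α hα),
    Finset.sum_add_distrib]
  congr 1
  rw [← Finset.mul_sum,
    Finset.sum_congr rfl (fun α hα => P.coord_simple hα' α hα),
    Finset.sum_ite_eq' P.Δ α' (fun _ => (1 : ℚ))]
  simp [hα']

lemma coord_pos_of_mem_posRoots {β : V} (hβ : β ∈ P.posRoots) :
    ∀ α ∈ P.Δ, 0 ≤ P.coord β α := (Finset.mem_filter.mp hβ).2

lemma mem_posRoots_of_coord_pos {β : V} (hβ : β ∈ P.Φ) {α : V} (hα : α ∈ P.Δ)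
    (h : 0 < P.coord β α) : β ∈ P.posRoots := by
  rw [RootSystemBase.posRoots, Finset.mem_filter]
  refine ⟨hβ, ?_⟩
  rcases P.pos_or_neg β hβ with hp | hn
  · exact hp
  · exact absurd (hn α hα) (not_le.mpr h)

end MoreLemmas

section KeyLemmas

lemma dualHighest_dominant {h₂ : V} (hh₂ : P.IsDualHighest h₂)
    (hpos : h₂ ∈ P.posRoots) : ∀ α' ∈ P.Δ, 0 ≤ P.B h₂ α' := by
  intro α' hα'
  by_contra hneg
  push_neg at hneg
  have hα'Φ : α' ∈ P.Φ := P.Δ_sub hα'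
  have hA : 0 < P.B α' α' := P.B_root_pos hα'Φ
  have hh₂Φ : h₂ ∈ P.Φ := hh₂.1
  have hH : 0 < P.B h₂ h₂ := P.B_root_pos hh₂Φ
  set c : ℚ := 2 * P.B α' h₂ / P.B α' α' with hc
  have hsym : P.B α' h₂ = P.B h₂ α' := P.B_symm α' h₂
  have hcneg : c < 0 := by
    rw [hc, hsym]
    exact div_neg_of_neg_of_pos (by linarith) hA
  have hδΦ : h₂ - c • α' ∈ P.Φ := P.reflect_mem α' hα'Φ h₂ hh₂Φ
  have hcoordδ : ∀ α'' ∈ P.Δ, P.coord (h₂ - c • α') α''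
      = P.coord h₂ α'' - c * P.coord α' α'' := by
    intro α'' h''
    have := P.coord_add_smul h₂ (-c) α' α'' h''
    rw [neg_smul, ← sub_eq_add_neg] at this
    rw [this]; ring
  have hδpos : h₂ - c • α' ∈ P.posRoots := by
    rw [RootSystemBase.posRoots, Finset.mem_filter]
    refine ⟨hδΦ, fun α'' h'' => ?_⟩
    rw [hcoordδ α'' h'', P.coord_simple hα' α'' h'']
    have hc2 := P.coord_pos_of_mem_posRoots hpos α'' h''
    split
    · linarith
    · simpa using hc2
  have hBδ : P.B (h₂ - c • α') (h₂ - c • α') = P.B h₂ h₂ := by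
    have hkey : c * P.B α' α' = 2 * P.B α' h₂ := by
      rw [hc]; field_simp
    simp only [map_sub, map_smul, LinearMap.sub_apply, LinearMap.smul_apply, smul_eq_mul]
    rw [show P.B h₂ α' = P.B α' h₂ from (P.B_symm h₂ α')]
    nlinarith [hkey]
  have hlt : P.corootMult h₂ α' < P.corootMult (h₂ - c • α') α' := by
    rw [P.corootMult_eq (ne_of_gt hH) hα',
      P.corootMult_eq (by rw [hBδ]; exact ne_of_gt hH) hα', hBδ,
      hcoordδ α' hα', P.coord_simple hα' α' hα', if_pos rfl]
    have h1 : P.coord h₂ α' < P.coord h₂ α' - c * 1 := by linarith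
    gcongr
  exact absurd (hh₂.2 _ hδpos α' hα') (not_le.mpr hlt)

end KeyLemmas

section KeyLemmas2

lemma coord_coroot {x : V} (hx : P.B x x ≠ 0) {α : V} (hα : α ∈ P.Δ) :
    P.coord (P.coroot x) α = P.corootMult x α * (2 / P.B α α) := by
  have hA : P.B α α ≠ 0 := ne_of_gt (P.B_root_pos (P.Δ_sub hα))
  rw [RootSystemBase.corootMult]
  field_simp

lemma B_dualHighest_le {h₂ : V} (hh₂ : P.IsDualHighest h₂) (hh₂pos : h₂ ∈ P.posRoots)
    {β : V} (hβpos : β ∈ P.posRoots) (hβdom : ∀ α' ∈ P.Δ, 0 ≤ P.B β α') :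
    P.B h₂ h₂ ≤ P.B β β := by
  have hh₂dom := P.dualHighest_dominant hh₂ hh₂pos
  have hβΦ : β ∈ P.Φ := (Finset.mem_filter.mp hβpos).1
  have hh₂Φ : h₂ ∈ P.Φ := hh₂.1
  have hH : 0 < P.B h₂ h₂ := P.B_root_pos hh₂Φ
  have hBβ : 0 < P.B β β := P.B_root_pos hβΦ
  have hkey : ∀ y : V, (∀ α' ∈ P.Δ, 0 ≤ P.B α' y) →
      P.B (P.coroot β) y ≤ P.B (P.coroot h₂) y := by
    intro y hy
    rw [P.B_expand (P.coroot h₂) y, P.B_expand (P.coroot β) y]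
    apply Finset.sum_le_sum
    intro α' hα'
    have hA : 0 < P.B α' α' := P.B_root_pos (P.Δ_sub hα')
    rw [P.coord_coroot (ne_of_gt hBβ) hα', P.coord_coroot (ne_of_gt hH) hα']
    have hm : P.corootMult β α' ≤ P.corootMult h₂ α' := hh₂.2 β hβpos α' hα'
    have h2A : 0 ≤ 2 / P.B α' α' := by positivity
    have := hy α' hα'
    apply mul_le_mul_of_nonneg_right _ this
    exact mul_le_mul_of_nonneg_right hm h2A
  have hdomb : ∀ α' ∈ P.Δ, 0 ≤ P.B α' (P.coroot β) := by
    intro α' hα'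
    rw [RootSystemBase.coroot, map_smul, smul_eq_mul]
    have : P.B α' β = P.B β α' := P.B_symm α' β
    rw [this]
    have := hβdom α' hα'
    positivity
  have hdomh : ∀ α' ∈ P.Δ, 0 ≤ P.B α' (P.coroot h₂) := by
    intro α' hα'
    rw [RootSystemBase.coroot, map_smul, smul_eq_mul]
    have : P.B α' h₂ = P.B h₂ α' := P.B_symm α' h₂
    rw [this]
    have := hh₂dom α' hα'
    positivity
  have h1 : P.B (P.coroot β) (P.coroot β) ≤ P.B (P.coroot h₂) (P.coroot β) := hkey _ hdomb
  have h2 : P.B (P.coroot β) (P.coroot h₂) ≤ P.B (P.coroot h₂) (P.coroot h₂) := hkey _ hdomh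
  have h3 : P.B (P.coroot h₂) (P.coroot β) = P.B (P.coroot β) (P.coroot h₂) := P.B_symm _ _
  have hbb : P.B (P.coroot β) (P.coroot β) = 4 / P.B β β := by
    rw [RootSystemBase.coroot]
    simp only [map_smul, LinearMap.smul_apply, smul_eq_mul]
    field_simp; ring
  have hhh : P.B (P.coroot h₂) (P.coroot h₂) = 4 / P.B h₂ h₂ := by
    rw [RootSystemBase.coroot]
    simp only [map_smul, LinearMap.smul_apply, smul_eq_mul]
    field_simp; ring
  have hfinal : 4 / P.B β β ≤ 4 / P.B h₂ h₂ := by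
    rw [← hbb, ← hhh]; linarith
  rw [div_le_div_iff₀ hBβ hH] at hfinal
  linarith

lemma exists_dominant_rep {α : V} (hα : α ∈ P.Δ) :
    ∃ β ∈ P.posRoots, P.B β β = P.B α α ∧ ∀ α' ∈ P.Δ, 0 ≤ P.B β α' := by
  classical
  have hαΦ : α ∈ P.Φ := P.Δ_sub hα
  set S : Finset V := P.Φ.filter (fun x => ∃ w ∈ P.weylGroup, w α = x) with hS
  have hαS : α ∈ S := Finset.mem_filter.mpr ⟨hαΦ, 1, one_mem _, rfl⟩
  obtain ⟨β, hβS, hmax⟩ := S.exists_max_image P.ht ⟨α, hαS⟩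
  obtain ⟨hβΦ, w, hwW, hwα⟩ := Finset.mem_filter.mp hβS
  have hBββ : P.B β β = P.B α α := by rw [← hwα]; exact P.weylGroup_B hwW α α
  have hdom : ∀ α' ∈ P.Δ, 0 ≤ P.B β α' := by
    intro α' hα'
    by_contra hneg
    push_neg at hneg
    have hα'Φ : α' ∈ P.Φ := P.Δ_sub hα'
    have hA : 0 < P.B α' α' := P.B_root_pos hα'Φ
    set c : ℚ := 2 * P.B α' β / P.B α' α' with hc
    have hsym : P.B α' β = P.B β α' := P.B_symm α' β
    have hcneg : c < 0 := by
      rw [hc, hsym]; exact div_neg_of_neg_of_pos (by linarith) hA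
    have hδΦ : β - c • α' ∈ P.Φ := P.reflect_mem α' hα'Φ β hβΦ
    have hδS : β - c • α' ∈ S := by
      refine Finset.mem_filter.mpr ⟨hδΦ, P.refl α' * w, mul_mem (P.refl_mem_weylGroup hα'Φ) hwW, ?_⟩
      rw [show (P.refl α' * w) α = P.refl α' (w α) from rfl, hwα,
        P.refl_apply (ne_of_gt hA)]
    have hle := hmax _ hδS
    rw [sub_eq_add_neg, ← neg_smul, P.ht_add_smul β (-c) hα'] at hle
    linarith
  have hβpos : β ∈ P.posRoots := by
    rw [RootSystemBase.posRoots, Finset.mem_filter]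
    refine ⟨hβΦ, ?_⟩
    rcases P.pos_or_neg β hβΦ with hp | hn
    · exact hp
    · exfalso
      have hexp := P.B_expand β β
      have hsum : P.B β β ≤ 0 := by
        rw [hexp]
        apply Finset.sum_nonpos
        intro α' hα'
        have h1 := hn α' hα'
        have h2 : 0 ≤ P.B α' β := by rw [P.B_symm α' β]; exact hdom α' hα'
        exact mul_nonpos_iff.mpr (Or.inr ⟨h1, h2⟩)
      linarith [P.B_root_pos hβΦ]
  exact ⟨β, hβpos, hBββ, hdom⟩

end KeyLemmas2

end RootSystemBase

open RootSystemBase in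
/-- If `α ∈ Δ` is co-special then there exists `w ∈ W_α` with `w α = α^{h₂}`,
the `Δ`-dominant root whose coroot is the highest coroot. -/
theorem leviConjugate_dualHighest_of_cospecial
    {V : Type*} [AddCommGroup V] [Module ℚ V] [FiniteDimensional ℚ V]
    (P : RootSystemBase V) (α : V) (hco : P.IsCospecial α)
    (h₂ : V) (hh₂ : P.IsDualHighest h₂) :
    ∃ w ∈ P.leviWeyl α, w α = h₂ := by
  classical
  obtain ⟨hαΔ, hco1⟩ := hco
  have hm1 : P.corootMult h₂ α = 1 := hco1 h₂ hh₂
  have hαΦ : α ∈ P.Φ := P.Δ_sub hαΔ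
  have hA : 0 < P.B α α := P.B_root_pos hαΦ
  have hh₂Φ : h₂ ∈ P.Φ := hh₂.1
  have hH : 0 < P.B h₂ h₂ := P.B_root_pos hh₂Φ
  have hcoordh₂ : P.coord h₂ α = P.B h₂ h₂ / P.B α α := by
    have heq := P.corootMult_eq (ne_of_gt hH) hαΔ
    rw [hm1] at heq
    field_simp at heq ⊢
    linarith
  have hh₂pos : h₂ ∈ P.posRoots := by
    apply P.mem_posRoots_of_coord_pos hh₂Φ hαΔ
    rw [hcoordh₂]; positivity
  -- length bound : B h₂ h₂ ≤ B α α
  obtain ⟨β, hβpos, hβlen, hβdom⟩ := P.exists_dominant_rep hαΔ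
  have hlen : P.B h₂ h₂ ≤ P.B α α := by
    have := P.B_dualHighest_le hh₂ hh₂pos hβpos hβdom
    rw [hβlen] at this; exact this
  -- minimal element of the W_α-orbit of h₂
  set O : Finset V := P.Φ.filter (fun x => ∃ w ∈ P.leviWeyl α, w h₂ = x) with hO
  have hh₂O : h₂ ∈ O := Finset.mem_filter.mpr ⟨hh₂Φ, 1, one_mem _, rfl⟩
  obtain ⟨γ, hγO, hmin⟩ := O.exists_min_image P.ht ⟨h₂, hh₂O⟩
  obtain ⟨hγΦ, w₀, hw₀, hw₀γ⟩ := Finset.mem_filter.mp hγO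
  have hγγ : P.B γ γ = P.B h₂ h₂ := by
    rw [← hw₀γ]; exact P.weylGroup_B (P.leviWeyl_le α hw₀) h₂ h₂
  have hG : 0 < P.B γ γ := by rw [hγγ]; exact hH
  have hcoordγ : P.coord γ α = P.B γ γ / P.B α α := by
    rw [hγγ, ← hw₀γ, P.leviWeyl_coord hαΔ hw₀ h₂, hcoordh₂]
  have hγpos : γ ∈ P.posRoots := by
    apply P.mem_posRoots_of_coord_pos hγΦ hαΔ
    rw [hcoordγ]; positivity
  -- minimality: γ is antidominant away from α
  have hmin' : ∀ α' ∈ P.Δ, α' ≠ α → P.B γ α' ≤ 0 := by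
    intro α' hα' hne
    by_contra hpos
    push_neg at hpos
    have hα'Φ : α' ∈ P.Φ := P.Δ_sub hα'
    have hA' : 0 < P.B α' α' := P.B_root_pos hα'Φ
    set c : ℚ := 2 * P.B α' γ / P.B α' α' with hc
    have hsym : P.B α' γ = P.B γ α' := P.B_symm α' γ
    have hcpos : 0 < c := by
      rw [hc, hsym]; positivity
    have hδΦ : γ - c • α' ∈ P.Φ := P.reflect_mem α' hα'Φ γ hγΦ
    have hδO : γ - c • α' ∈ O := by
      refine Finset.mem_filter.mpr ⟨hδΦ, P.refl α' * w₀,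
        mul_mem (Subgroup.subset_closure ⟨α', hα', hne, rfl⟩) hw₀, ?_⟩
      rw [show (P.refl α' * w₀) h₂ = P.refl α' (w₀ h₂) from rfl, hw₀γ,
        P.refl_apply (ne_of_gt hA')]
    have hle := hmin _ hδO
    rw [sub_eq_add_neg, ← neg_smul, P.ht_add_smul γ (-c) hα'] at hle
    linarith
  -- key inequality : B α α ≤ B α γ
  have hkey : P.B α α ≤ P.B α γ := by
    have hexp := P.B_expand γ γ
    rw [← Finset.add_sum_erase P.Δ _ hαΔ] at hexp
    have hrest : ∑ α' ∈ P.Δ.erase α, P.coord γ α' * P.B α' γ ≤ 0 := by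
      apply Finset.sum_nonpos
      intro α' hα'
      have hα'Δ : α' ∈ P.Δ := Finset.mem_of_mem_erase hα'
      have hne : α' ≠ α := Finset.ne_of_mem_erase hα'
      have h1 := P.coord_pos_of_mem_posRoots hγpos α' hα'Δ
      have h2 : P.B α' γ ≤ 0 := by rw [P.B_symm α' γ]; exact hmin' α' hα'Δ hne
      exact mul_nonpos_iff.mpr (Or.inl ⟨h1, h2⟩)
    have hineq : P.B γ γ ≤ P.coord γ α * P.B α γ := by linarith
    rw [hcoordγ] at hineq
    -- G ≤ (G/A) * X  with G, A > 0  ⇒  A ≤ X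
    have h3 : P.B γ γ * P.B α α ≤ P.B γ γ * P.B α γ := by
      have := mul_le_mul_of_nonneg_right hineq hA.le
      calc P.B γ γ * P.B α α ≤ P.B γ γ / P.B α α * P.B α γ * P.B α α := this
        _ = P.B γ γ * P.B α γ := by field_simp
    exact le_of_mul_le_mul_left h3 hG
  -- Cauchy-Schwarz squeeze
  have hGA : P.B γ γ ≤ P.B α α := by rw [hγγ]; exact hlen
  have hcs := P.cauchy_schwarz (u := α) (v := γ) hA
  have hX : P.B α γ = P.B α α := by nlinarith
  have heq : (P.B α γ) ^ 2 = P.B α α * P.B γ γ := by nlinarith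
  have hγeq := P.cauchy_schwarz_eq hA heq
  rw [hX, div_self (ne_of_gt hA), one_smul] at hγeq
  refine ⟨w₀⁻¹, inv_mem hw₀, ?_⟩
  have : w₀ h₂ = α := by rw [hw₀γ, hγeq]
  exact (LinearEquiv.symm_apply_eq w₀).mpr this.symm
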